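/- Every pair of generic immersions K consisting of S₁ and S₂ is homotopic, through pairs of immersions, to a pair of generic immersions K* whose two immersions are disjoint (do not intersect each other, and neither entirely encircles the other). -/

import Mathlib

/-- `f : ℝ → ℂ` is an immersed loop: a smooth `1`-periodic map (i.e. a smooth map
`S¹ = ℝ/ℤ → ℂ`) with nowhere-vanishing derivative. -/
def IsImmersedLoop (f : ℝ → ℂ) : Prop :=
  ContDiff ℝ (⊤ : ℕ∞) f ∧ Function.Periodic f 1 ∧ ∀ t : ℝ, deriv f t ≠ 0

/-- The branches of `f` at `s` and of `g` at `t` cross transversally: the two velocity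
vectors are not parallel over `ℝ`. -/
def TransverseAt (f g : ℝ → ℂ) (s t : ℝ) : Prop :=
  ∀ c : ℝ, deriv f s ≠ c • deriv g t

/-- The set of parameters (on either of the two loops, taken in a fundamental domain
`[0,1)` of `S¹ = ℝ/ℤ`) at which the pair `(f, g)` passes through the point `p`. -/
def hits (f g : ℝ → ℂ) (p : ℂ) : Set (Bool × ℝ) :=
  {x | x.2 ∈ Set.Ico (0 : ℝ) 1 ∧ (bif x.1 then f else g) x.2 = p}

/-- A pair of generic immersions `K : S¹ ⊔ S¹ → ℂ`: a smooth map with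
nowhere-vanishing derivative whose restrictions `f`, `g` to the two circles are generic
immersions and whose image has only transverse double points (double points of a single
immersion or intersections of the two immersions) and no triple points. -/
structure GenericPair where
  /-- the first immersion `S₁` -/
  f : ℝ → ℂ
  /-- the second immersion `S₂` -/
  g : ℝ → ℂ
  loop_f : IsImmersedLoop f
  loop_g : IsImmersedLoop g
  /-- all self-intersections of `S₁` are transverse -/
  selfTrans_f : ∀ s t : ℝ, s ∈ Set.Ico (0 : ℝ) 1 → t ∈ Set.Ico (0 : ℝ) 1 →
    s ≠ t → f s = f t → TransverseAt f f s t
  /-- all self-intersections of `S₂` are transverse -/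
  selfTrans_g : ∀ s t : ℝ, s ∈ Set.Ico (0 : ℝ) 1 → t ∈ Set.Ico (0 : ℝ) 1 →
    s ≠ t → g s = g t → TransverseAt g g s t
  /-- all intersections of `S₁` and `S₂` are transverse -/
  mutualTrans : ∀ s t : ℝ, s ∈ Set.Ico (0 : ℝ) 1 → t ∈ Set.Ico (0 : ℝ) 1 →
    f s = g t → TransverseAt f g s t
  /-- the pair has no triple points: no point of `ℂ` is hit by more than two branches -/
  noTriple : ∀ (p : ℂ) (a b c : Bool × ℝ), a ∈ hits f g p → b ∈ hits f g p →
    c ∈ hits f g p → a = b ∨ a = c ∨ b = c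

/-- The winding number of the loop `f` around a point `p` (as a contour integral). -/
noncomputable def windingNumber (f : ℝ → ℂ) (p : ℂ) : ℂ :=
  (2 * Real.pi * Complex.I)⁻¹ * ∫ t in (0 : ℝ)..1, deriv f t / (f t - p)

/-- The pair `K` is disjoint: the two immersions do not intersect each other and
neither entirely encircles the other (the winding number of each immersion around
every point of the other one vanishes). -/
def IsDisjointPair (K : GenericPair) : Prop :=
  Set.range K.f ∩ Set.range K.g = ∅ ∧
  (∀ p ∈ Set.range K.f, windingNumber K.g p = 0) ∧
  (∀ p ∈ Set.range K.g, windingNumber K.f p = 0)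

/-- Two pairs of immersions `K` and `K'` are homotopic if there exists a smooth map
`g : (S¹ ⊔ S¹) × [0,1] → ℂ` restricting to `K` at time `0` and to `K'` at time `1`
and to a pair of immersions at every time `t ∈ [0,1]`. -/
def PairHomotopic (K K' : GenericPair) : Prop :=
  ∃ F G : ℝ → ℝ → ℂ,
    ContDiff ℝ (⊤ : ℕ∞) (Function.uncurry F) ∧ ContDiff ℝ (⊤ : ℕ∞) (Function.uncurry G) ∧
    (∀ t ∈ Set.Icc (0 : ℝ) 1, IsImmersedLoop (F t) ∧ IsImmersedLoop (G t)) ∧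
    F 0 = K.f ∧ G 0 = K.g ∧ F 1 = K'.f ∧ G 1 = K'.g

/-- Any continuous `1`-periodic function `ℝ → ℂ` is bounded. -/
lemma periodic_bound {f : ℝ → ℂ} (hf : Continuous f) (hp : Function.Periodic f 1) :
    ∃ R : ℝ, 0 ≤ R ∧ ∀ t, ‖f t‖ ≤ R := by
  obtain ⟨C, hC⟩ := (isCompact_Icc (a := (0:ℝ)) (b := 1)).exists_bound_of_continuousOn
    hf.continuousOn
  refine ⟨max C 0, le_max_right _ _, fun t => ?_⟩
  have h1 : f (Int.fract t) = f t := by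
    have := hp.sub_int_mul_eq (n := ⌊t⌋) (x := t)
    rw [Int.fract]
    simpa using this
  calc ‖f t‖ = ‖f (Int.fract t)‖ := by rw [h1]
    _ ≤ C := hC _ ⟨Int.fract_nonneg t, (Int.fract_lt_one t).le⟩
    _ ≤ max C 0 := le_max_left _ _

/-- The logarithmic integral of a smooth loop lying in the right half-plane vanishes. -/
lemma integral_deriv_div_self {h : ℝ → ℂ} (hh : ContDiff ℝ (⊤ : ℕ∞) h) (hper : h 1 = h 0)
    (hpos : ∀ t, 0 < (h t).re) :
    ∫ t in (0:ℝ)..1, deriv h t / h t = 0 := by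
  have hne : ∀ t, h t ≠ 0 := by
    intro t ht
    have := hpos t
    rw [ht] at this
    simp at this
  have hd : ∀ t, HasDerivAt h (deriv h t) t :=
    fun t => (hh.differentiable (by simp) t).hasDerivAt
  have hL : ∀ t ∈ Set.uIcc (0:ℝ) 1,
      HasDerivAt (fun s => Complex.log (h s)) (deriv h t / h t) t := by
    intro t _
    have := (Complex.hasDerivAt_log (Or.inl (hpos t))).comp t (hd t)
    rw [div_eq_inv_mul]; exact this
  have hint : IntervalIntegrable (fun t => deriv h t / h t) MeasureTheory.volume 0 1 :=
    ((hh.continuous_deriv (by simp)).div hh.continuous hne).intervalIntegrable _ _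
  rw [intervalIntegral.integral_eq_sub_of_hasDerivAt hL hint, hper, sub_self]

/-- Every pair of generic immersions `K` consisting of `S₁` and `S₂` is homotopic,
through pairs of immersions, to a pair of generic immersions `K*` whose two immersions
are disjoint (do not intersect each other, and neither entirely encircles the other). -/
theorem exists_homotopic_disjoint_pair (K : GenericPair) :
    ∃ Kstar : GenericPair, PairHomotopic K Kstar ∧ IsDisjointPair Kstar := by
  obtain ⟨hf_smooth, hf_per, hf_der⟩ := K.loop_f
  obtain ⟨hg_smooth, hg_per, hg_der⟩ := K.loop_g
  obtain ⟨R, hR0, hR⟩ := periodic_bound hf_smooth.continuous hf_per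
  obtain ⟨S, hS0, hS⟩ := periodic_bound hg_smooth.continuous hg_per
  set M : ℝ := max R S with hM
  have hfM : ∀ t, ‖K.f t‖ ≤ M := fun t => (hR t).trans (le_max_left _ _)
  have hgM : ∀ t, ‖K.g t‖ ≤ M := fun t => (hS t).trans (le_max_right _ _)
  have hM0 : 0 ≤ M := hR0.trans (le_max_left _ _)
  set C : ℝ := 2 * M + 1 with hC
  set g' : ℝ → ℂ := fun t => K.g t + (C : ℂ) with hg'
  have hg'_smooth : ContDiff ℝ (⊤ : ℕ∞) g' := hg_smooth.add contDiff_const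
  have hg'_per : Function.Periodic g' 1 := by
    intro t; simp only [hg']; rw [hg_per t]
  have hderiv_g' : ∀ t, deriv g' t = deriv K.g t := fun t => deriv_add_const _
  have hg'_loop : IsImmersedLoop g' :=
    ⟨hg'_smooth, hg'_per, fun t => by rw [hderiv_g']; exact hg_der t⟩
  have hsep : ∀ s t : ℝ, (K.f s).re < (g' t).re := by
    intro s t
    have h1 : (K.f s).re ≤ M :=
      le_trans (le_abs_self _) ((Complex.abs_re_le_norm _).trans (hfM s))
    have h2 : -M ≤ (K.g t).re :=
      (abs_le.mp ((Complex.abs_re_le_norm _).trans (hgM t))).1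
    have h3 : (g' t).re = (K.g t).re + C := by simp [hg']
    rw [h3, hC]
    linarith
  have hne : ∀ s t : ℝ, K.f s ≠ g' t := by
    intro s t h
    have := hsep s t
    rw [h] at this
    exact lt_irrefl _ this
  refine ⟨⟨K.f, g', ⟨hf_smooth, hf_per, hf_der⟩, hg'_loop, K.selfTrans_f, ?_, ?_, ?_⟩, ?_, ?_⟩
  · -- selfTrans_g
    intro s t hs ht hst heq c
    rw [hderiv_g', hderiv_g']
    exact K.selfTrans_g s t hs ht hst (by simpa [hg'] using heq) c
  · -- mutualTrans
    exact fun s t _ _ heq => absurd heq (hne s t)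
  · -- noTriple
    intro p a b c ha hb hc
    by_cases hp : ∃ s, K.f s = p
    · obtain ⟨s₀, hs₀⟩ := hp
      have key : ∀ x : Bool × ℝ, x ∈ hits K.f g' p → x ∈ hits K.f K.g p := by
        rintro ⟨b, t⟩ ⟨hx1, hx2⟩
        cases b with
        | true => exact ⟨hx1, hx2⟩
        | false =>
          exfalso
          simp only [cond_false] at hx2
          exact hne s₀ t (hs₀.trans hx2.symm)
      exact K.noTriple p a b c (key a ha) (key b hb) (key c hc)
    · push_neg at hp
      have key : ∀ x : Bool × ℝ, x ∈ hits K.f g' p →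
          x ∈ hits K.f K.g (p - (C : ℂ)) := by
        rintro ⟨b, t⟩ ⟨hx1, hx2⟩
        cases b with
        | true =>
          exact absurd hx2 (by simpa using hp t)
        | false =>
          refine ⟨hx1, ?_⟩
          simp only [cond_false] at hx2 ⊢
          have : K.g t + (C : ℂ) = p := hx2
          linear_combination this
      exact K.noTriple (p - (C : ℂ)) a b c (key a ha) (key b hb) (key c hc)
  · -- the homotopy
    refine ⟨fun _ s => K.f s, fun t s => K.g s + ((t * C : ℝ) : ℂ), ?_, ?_, ?_, rfl, ?_, rfl, ?_⟩
    · exact hf_smooth.comp contDiff_snd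
    · show ContDiff ℝ (⊤ : ℕ∞) (fun q : ℝ × ℝ => K.g q.2 + ((q.1 * C : ℝ) : ℂ))
      exact (hg_smooth.comp contDiff_snd).add
        (Complex.ofRealCLM.contDiff.comp (contDiff_fst.mul contDiff_const))
    · intro t _
      refine ⟨⟨hf_smooth, hf_per, hf_der⟩, ?_, ?_, ?_⟩
      · exact hg_smooth.add contDiff_const
      · intro s; simp only []; rw [hg_per s]
      · intro s; rw [deriv_add_const]; exact hg_der s
    · funext s; simp
    · funext s; simp [hg']
  · -- disjointness
    refine ⟨?_, ?_, ?_⟩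
    · ext p
      simp only [Set.mem_inter_iff, Set.mem_range, Set.mem_empty_iff_false, iff_false]
      rintro ⟨⟨s, hs⟩, ⟨t, ht⟩⟩
      exact hne s t (hs.trans ht.symm)
    · rintro p ⟨s, rfl⟩
      have hz : (∫ t in (0:ℝ)..1, deriv g' t / (g' t - K.f s)) = 0 := by
        have h0 := integral_deriv_div_self (h := fun t => g' t - K.f s)
          (hg'_smooth.sub contDiff_const)
          (by rw [show g' 1 = g' 0 by simpa using hg'_per 0])
          (fun t => by simpa [Complex.sub_re, sub_pos] using hsep s t)
        rw [← h0]
        apply intervalIntegral.integral_congr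
        intro t _
        simp only [deriv_sub_const]
      unfold windingNumber
      rw [hz, mul_zero]
    · rintro p ⟨t, rfl⟩
      have hz : (∫ u in (0:ℝ)..1, deriv K.f u / (K.f u - g' t)) = 0 := by
        have h0 := integral_deriv_div_self (h := fun u => g' t - K.f u)
          (contDiff_const.sub hf_smooth)
          (by rw [show K.f 1 = K.f 0 by simpa using hf_per 0])
          (fun u => by simpa [Complex.sub_re, sub_pos] using hsep u t)
        rw [← h0]
        apply intervalIntegral.integral_congr
        intro u _
        simp only [deriv_const_sub]
        rw [show K.f u - g' t = -(g' t - K.f u) by ring, div_neg, neg_div]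
      unfold windingNumber
      rw [hz, mul_zero]
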